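/- arXiv:math/0408206 — 2 statements merged into one kernel-verified Lean document; each statement's English description precedes it below -/
import Mathlib

section
/- Let V be an 8-dimensional real inner product space with two orthogonal complex structures I and J (linear isometries with I∘I = J∘J = −id) that anticommute, I∘J = −J∘I, and set K = I∘J. Let E ⊆ V be a 4-dimensional subspace with I(E) = E. Then: (i) the quantity ‖P_E(JX)‖ is the same for every unit vector X ∈ E; call this common value c. (ii) The endomorphism T = P_E ∘ J restricted to E satisfies T ∘ T = −c²·id_E; that is, E has equal Kähler angles with respect to J, with cosθ_J = c. (iii) For every unit vector X ∈ E, ‖P_E(KX)‖ = ‖P_E(JX)‖; that is, the K-Kähler angle of E equals its J-Kähler angle. -/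
/-!
STATEMENT 3: `V` an 8-dimensional real inner product space with anticommuting
orthogonal complex structures `I`, `J`, and `K = I ∘ J`. If `E ⊆ V` is a
4-dimensional subspace with `I(E) = E`, then:
(i) `‖P_E (J X)‖` is the same for every unit vector `X ∈ E` (call it `c`);
(ii) `T ∘ T = −c²·id_E` where `T = P_E ∘ J` restricted to `E`;
(iii) for every unit vector `X ∈ E`, `‖P_E (K X)‖ = ‖P_E (J X)‖`.
-/

open scoped RealInnerProductSpace

noncomputable section

variable {V : Type*} [NormedAddCommGroup V] [InnerProductSpace ℝ V] [FiniteDimensional ℝ V]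

/-- `T_U = P_U ∘ J` restricted to the subspace `U`. -/
noncomputable def TU (J : V →ₗ[ℝ] V) (U : Submodule ℝ V) (X : U) : U :=
  Submodule.orthogonalProjectionOnto U (J X)


/-!
Restricting `I` and compressing `J` to `E` gives a complex structure `i` and a skew map `T` on `E`
that anticommute, which forces `⟪T x, i x⟫ = 0`. If `x ≠ 0` and `T x ≠ 0`, the vectors
`x, i x, T x, i (T x)` are then nonzero and pairwise orthogonal, hence span the 4-dimensional `E`,
and `‖x‖² T (T x) + ‖T x‖² x` is orthogonal to all four of them. So every vector is an eigenvector
of `T ∘ T`, which is therefore a scalar `-c²`. Part (iii) holds because `P_E` commutes with `I`.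
-/

section SkewSymmetric

variable {F : Type*} [NormedAddCommGroup F] [InnerProductSpace ℝ F]

def IsSkewSymmetric (T : F →ₗ[ℝ] F) : Prop :=
  ∀ x y, ⟪T x, y⟫ = -⟪x, T y⟫

theorem isSkewSymmetric_of_inner_map_map_of_sq_eq_neg {f : F →ₗ[ℝ] F}
    (hf : ∀ x y, ⟪f x, f y⟫ = ⟪x, y⟫) (hsq : ∀ x, f (f x) = -x) : IsSkewSymmetric f := by
  intro x y
  have h := hf x (f y)
  rw [hsq, inner_neg_right] at h
  linarith

namespace IsSkewSymmetric

variable {T : F →ₗ[ℝ] F}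

theorem inner_map_self_eq_zero (hT : IsSkewSymmetric T) (x : F) : ⟪T x, x⟫ = 0 := by
  have h := hT x x
  rw [real_inner_comm (T x) x] at h
  linarith

theorem inner_map_map_of_sq_eq_neg (hT : IsSkewSymmetric T) (hsq : ∀ x, T (T x) = -x)
    (x y : F) : ⟪T x, T y⟫ = ⟪x, y⟫ := by
  rw [hT, hsq, inner_neg_right, neg_neg]

theorem map_mem_orthogonal (hT : IsSkewSymmetric T) {E : Submodule ℝ F} (hE : E.map T ≤ E)
    {w : F} (hw : w ∈ Eᗮ) : T w ∈ Eᗮ := by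
  intro u hu
  rw [← neg_eq_zero, ← hT, Submodule.inner_right_of_mem_orthogonal (hE ⟨u, hu, rfl⟩) hw]

theorem starProjection_map (hT : IsSkewSymmetric T) {E : Submodule ℝ F}
    [E.HasOrthogonalProjection] (hE : E.map T ≤ E) (v : F) :
    E.starProjection (T v) = T (E.starProjection v) := by
  refine Submodule.eq_starProjection_of_mem_orthogonal
    (hE ⟨_, E.starProjection_apply_mem v, rfl⟩) ?_
  rw [← map_sub]
  exact hT.map_mem_orthogonal hE (E.sub_starProjection_mem_orthogonal v)

theorem restrict (hT : IsSkewSymmetric T) {E : Submodule ℝ F} (hE : ∀ x ∈ E, T x ∈ E) :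
    IsSkewSymmetric (T.restrict hE) :=
  fun x y => hT x y

theorem compress (hT : IsSkewSymmetric T) (E : Submodule ℝ F) [E.HasOrthogonalProjection] :
    IsSkewSymmetric (E.orthogonalProjectionOnto.toLinearMap ∘ₗ T ∘ₗ E.subtype) := by
  intro x y
  simp only [LinearMap.comp_apply, ContinuousLinearMap.coe_coe, Submodule.subtype_apply,
    Submodule.inner_orthogonalProjectionOnto_eq_of_mem_right,
    Submodule.inner_orthogonalProjectionOnto_eq_of_mem_left]
  exact hT x y

end IsSkewSymmetric

end SkewSymmetric

section FourDimensional

open Module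

variable {F : Type*} [NormedAddCommGroup F] [InnerProductSpace ℝ F]

theorem eq_zero_of_forall_inner_eq_zero_of_pairwise_inner_eq_zero [FiniteDimensional ℝ F]
    {ι : Type*} [Fintype ι] (hcard : Fintype.card ι = finrank ℝ F) {v : ι → F}
    (hv0 : ∀ k, v k ≠ 0) (hv : Pairwise fun k l => ⟪v k, v l⟫ = 0) {u : F}
    (hu : ∀ k, ⟪u, v k⟫ = 0) : u = 0 := by
  have hspan :=
    (linearIndependent_of_ne_zero_of_inner_eq_zero hv0 hv).span_eq_top_of_card_eq_finrank' hcard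
  have h : Submodule.span ℝ {u} ⟂ Submodule.span ℝ (Set.range v) :=
    Submodule.isOrtho_span.2 (by rintro _ rfl _ ⟨k, rfl⟩; exact hu k)
  rwa [hspan, Submodule.isOrtho_top_right, Submodule.span_singleton_eq_bot] at h

variable {T i : F →ₗ[ℝ] F} (hT : IsSkewSymmetric T) (hi : IsSkewSymmetric i)
  (hTi : ∀ x, T (i x) = -i (T x))
include hT hi hTi

theorem inner_map_map_self_eq_zero_of_anticomm (x : F) : ⟪T x, i x⟫ = 0 := by
  have h1 := hT x (i x)
  have h2 := hi x (T x)
  rw [hTi, inner_neg_right, neg_neg] at h1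
  rw [real_inner_comm (T x) (i x)] at h2
  linarith

variable (hisq : ∀ x, i (i x) = -x)
include hisq

theorem norm_sq_smul_map_map [FiniteDimensional ℝ F] (hF : finrank ℝ F = 4) (x : F) :
    ‖x‖ ^ 2 • T (T x) = -‖T x‖ ^ 2 • x := by
  rcases eq_or_ne x 0 with rfl | hx
  · simp
  rcases eq_or_ne (T x) 0 with ha | ha
  · simp [ha]
  set a := T x
  have hi0 : ∀ y ≠ 0, i y ≠ 0 := fun y hy h => hy (by simpa [h] using (hisq y).symm)
  have hxix : ⟪x, i x⟫ = 0 := by rw [real_inner_comm]; exact hi.inner_map_self_eq_zero x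
  have hxa : ⟪x, a⟫ = 0 := by rw [real_inner_comm]; exact hT.inner_map_self_eq_zero x
  have hixa : ⟪i x, a⟫ = 0 := by
    rw [real_inner_comm]; exact inner_map_map_self_eq_zero_of_anticomm hT hi hTi x
  have hxia : ⟪x, i a⟫ = 0 := by rw [← neg_eq_zero, ← hi, hixa]
  have hixia : ⟪i x, i a⟫ = 0 := by rw [hi.inner_map_map_of_sq_eq_neg hisq, hxa]
  have haia : ⟪a, i a⟫ = 0 := by rw [real_inner_comm]; exact hi.inner_map_self_eq_zero a
  have hTax : ⟪T a, x⟫ = -‖a‖ ^ 2 := by rw [hT, real_inner_self_eq_norm_sq]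
  have hTaix : ⟪T a, i x⟫ = 0 := by rw [hT, hTi, inner_neg_right, neg_neg]; exact haia
  have hTaa : ⟪T a, a⟫ = 0 := hT.inner_map_self_eq_zero a
  have hTaia : ⟪T a, i a⟫ = 0 := inner_map_map_self_eq_zero_of_anticomm hT hi hTi a
  have hu : ‖x‖ ^ 2 • T a + ‖a‖ ^ 2 • x = 0 := by
    refine eq_zero_of_forall_inner_eq_zero_of_pairwise_inner_eq_zero (v := ![x, i x, a, i a])
      (by simp [hF]) ?_ ?_ ?_
    · intro k
      fin_cases k <;> simp [hx, ha, hi0]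
    · intro k l hkl
      fin_cases k <;> fin_cases l <;> simp_all [real_inner_comm]
    · intro k
      fin_cases k <;> simp [inner_add_left, real_inner_smul_left, mul_comm, *]
  rw [neg_smul, ← eq_neg_iff_add_eq_zero.2 hu]

theorem exists_map_map_eq_neg_sq_smul [FiniteDimensional ℝ F] (hF : finrank ℝ F = 4) :
    ∃ c : ℝ, ∀ x, T (T x) = -c ^ 2 • x ∧ ‖T x‖ = c * ‖x‖ := by
  obtain ⟨μ, hμ⟩ := LinearMap.exists_eq_smul_id_of_forall_notLinearIndependent (f := T ∘ₗ T)
    fun x hlin => by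
      have hx : x ≠ 0 := hlin.ne_zero 0
      have h := LinearIndependent.pair_iff.1 hlin (‖T x‖ ^ 2) (‖x‖ ^ 2)
        (by simp [norm_sq_smul_map_map hT hi hTi hisq hF x])
      exact pow_ne_zero 2 (norm_ne_zero_iff.2 hx) h.2
  have hTT : ∀ x, T (T x) = μ • x := fun x => by simpa using LinearMap.congr_fun hμ x
  have hnorm : ∀ x, ‖T x‖ ^ 2 = -μ * ‖x‖ ^ 2 := fun x => by
    have h := hT (T x) x
    rw [hTT, real_inner_smul_left, real_inner_self_eq_norm_sq, real_inner_self_eq_norm_sq] at h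
    linarith
  have : Nontrivial F := Module.nontrivial_of_finrank_pos (R := ℝ) (by omega)
  obtain ⟨x₀, hx₀⟩ := exists_ne (0 : F)
  have hμ : 0 ≤ -μ := nonneg_of_mul_nonneg_left ((hnorm x₀).symm ▸ sq_nonneg _)
    (pow_pos (norm_pos_iff.2 hx₀) 2)
  refine ⟨√(-μ), fun x => ⟨by rw [hTT, Real.sq_sqrt hμ, neg_neg], ?_⟩⟩
  rw [← Real.sqrt_sq (norm_nonneg (T x)), hnorm, Real.sqrt_mul hμ, Real.sqrt_sq (norm_nonneg x)]

end FourDimensional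

theorem stmt_3_general
    (I J : V →ₗ[ℝ] V)
    (hIorth : ∀ x y : V, ⟪I x, I y⟫ = ⟪x, y⟫)
    (hJorth : ∀ x y : V, ⟪J x, J y⟫ = ⟪x, y⟫)
    (hIsq : ∀ x : V, I (I x) = -x)
    (hJsq : ∀ x : V, J (J x) = -x)
    (hanti : ∀ x : V, I (J x) = -(J (I x)))
    (E : Submodule ℝ V) (hEdim : Module.finrank ℝ E = 4)
    (hIE : E.map I = E) :
    ∃ c : ℝ,
      (∀ X : E, ‖X‖ = 1 → ‖(Submodule.orthogonalProjectionOnto E (J X) : E)‖ = c) ∧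
      (∀ X : E, TU J E (TU J E X) = -(c ^ 2) • X) ∧
      (∀ X : E, ‖X‖ = 1 →
        ‖(Submodule.orthogonalProjectionOnto E ((I ∘ₗ J) X) : E)‖ =
        ‖(Submodule.orthogonalProjectionOnto E (J X) : E)‖) := by
  have hI := isSkewSymmetric_of_inner_map_map_of_sq_eq_neg hIorth hIsq
  have hJ := isSkewSymmetric_of_inner_map_map_of_sq_eq_neg hJorth hJsq
  have hPI (v : V) : E.starProjection (I v) = I (E.starProjection v) :=
    hI.starProjection_map hIE.le v
  have hIE_mem (x : V) (hx : x ∈ E) : I x ∈ E := hIE.le ⟨x, hx, rfl⟩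
  obtain ⟨c, hc⟩ := exists_map_map_eq_neg_sq_smul (hJ.compress E) (hI.restrict hIE_mem)
    (fun x => Subtype.ext <| by simp [← neg_eq_iff_eq_neg.2 (hanti x), hPI])
    (fun x => Subtype.ext (hIsq x)) hEdim
  refine ⟨c, fun X hX => by simpa [hX] using (hc X).2, fun X => (hc X).1, fun X _ => ?_⟩
  change ‖E.starProjection (I (J X))‖ = ‖E.starProjection (J X)‖
  rw [hPI]
  exact (I.isometryOfInner hIorth).norm_map _

theorem stmt_3 (hV : Module.finrank ℝ V = 8)
    (I J : V →ₗ[ℝ] V)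
    (hIorth : ∀ x y : V, ⟪I x, I y⟫ = ⟪x, y⟫)
    (hJorth : ∀ x y : V, ⟪J x, J y⟫ = ⟪x, y⟫)
    (hIsq : ∀ x : V, I (I x) = -x)
    (hJsq : ∀ x : V, J (J x) = -x)
    (hanti : ∀ x : V, I (J x) = -(J (I x)))
    (E : Submodule ℝ V) (hEdim : Module.finrank ℝ E = 4)
    (hIE : E.map I = E) :
    ∃ c : ℝ,
      (∀ X : E, ‖X‖ = 1 → ‖(Submodule.orthogonalProjectionOnto E (J X) : E)‖ = c) ∧
      (∀ X : E, TU J E (TU J E X) = -(c ^ 2) • X) ∧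
      (∀ X : E, ‖X‖ = 1 →
        ‖(Submodule.orthogonalProjectionOnto E ((I ∘ₗ J) X) : E)‖ =
        ‖(Submodule.orthogonalProjectionOnto E (J X) : E)‖) :=
  stmt_3_general I J hIorth hJorth hIsq hJsq hanti E hEdim hIE
end
end

section
/- Let u(x,y,z,w) = sin(x+z)·cosh(y+w), v(x,y,z,w) = −cos(x+z)·sinh(y+w), and f = (u, v, −u, −v) : ℝ⁴ → ℝ⁴. Then for every p = (x,y,z,w), the graph Γ_f has equal Kähler angles at p with cos²θ(p) = 4·t(p) / (1 + 4·t(p)), where t(p) = cos²(x+z) + sinh²(y+w). In particular cos²θ(p) < 1 for all p, so Γ_f has no J₀-complex points, while cos²θ attains every value in [0, 1). -/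
/-!
STATEMENT 7: With `u(x,y,z,w) = sin(x+z)·cosh(y+w)`, `v(x,y,z,w) = −cos(x+z)·sinh(y+w)`
and `f = (u, v, −u, −v)`, the graph `Γ_f` has equal Kähler angles at every
`p = (x,y,z,w)`, with `cos²θ(p) = 4t(p)/(1 + 4t(p))` where
`t(p) = cos²(x+z) + sinh²(y+w)`. In particular `cos²θ(p) < 1` for all `p`
(no `J₀`-complex points), while `cos²θ` attains every value in `[0,1)`.
-/

open scoped RealInnerProductSpace

noncomputable section

abbrev E4 : Type := EuclideanSpace ℝ (Fin 4)

noncomputable def mk4 (a b c d : ℝ) : E4 := (WithLp.equiv 2 (Fin 4 → ℝ)).symm ![a, b, c, d]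

noncomputable def Sp (f : E4 → E4) (p : E4) : E4 →L[ℝ] E4 :=
  Ring.inverse (1 + ContinuousLinearMap.adjoint (fderiv ℝ f p) * fderiv ℝ f p) *
    (ContinuousLinearMap.adjoint (fderiv ℝ f p) - fderiv ℝ f p)

noncomputable def u7 (p : E4) : ℝ := Real.sin (p 0 + p 2) * Real.cosh (p 1 + p 3)

noncomputable def v7 (p : E4) : ℝ := -(Real.cos (p 0 + p 2) * Real.sinh (p 1 + p 3))

noncomputable def f7 : E4 → E4 := fun p => mk4 (u7 p) (v7 p) (-(u7 p)) (-(v7 p))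

/-- `t(p) = cos²(x+z) + sinh²(y+w)` -/
noncomputable def t7 (p : E4) : ℝ := Real.cos (p 0 + p 2) ^ 2 + Real.sinh (p 1 + p 3) ^ 2

/-- the claimed value of `cos²θ` at `p` -/
noncomputable def cos2 (p : E4) : ℝ := 4 * t7 p / (1 + 4 * t7 p)

/-!
Write `q = x + z`, `r = y + w`, `a = cos q cosh r`, `b = sin q sinh r`. Then `Df = [[M, M], [-M, -M]]`
with `M = [[a, b], [b, -a]]` symmetric and `M² = (a² + b²) I = t I`. Hence `Df² = 0`, so the tangent
planes are never `J₀`-invariant, and `DfᵀDf = 2t P` with `P = [[I, I], [I, I]]`, `P² = 2P`, so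
`(1 + DfᵀDf)⁻¹ = 1 - 2t/(1 + 4t) P` is explicit; multiplying out gives `S_p² = -4t/(1 + 4t)`.
Finally `t` takes every value in `[0, ∞)` along `q = π/2`.
-/

open Matrix

theorem Matrix.isUnit_one_add_conjTranspose_mul_self {n K : Type*} [Fintype n] [DecidableEq n]
    [Field K] [PartialOrder K] [StarRing K] [StarOrderedRing K] (A : Matrix n n K) :
    IsUnit (1 + Aᴴ * A) :=
  (PosDef.one.add_posSemidef (posSemidef_conjTranspose_mul_self A)).isUnit

theorem Sp_eq_toEuclideanCLM {f : E4 → E4} {p : E4} {A S : Matrix (Fin 4) (Fin 4) ℝ}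
    (hf : HasFDerivAt f (toEuclideanCLM (𝕜 := ℝ) A) p) (hS : (1 + Aᴴ * A) * S = Aᴴ - A) :
    Sp f p = toEuclideanCLM (𝕜 := ℝ) S := by
  have hunit := (isUnit_one_add_conjTranspose_mul_self A).map (toEuclideanCLM (n := Fin 4) (𝕜 := ℝ))
  rw [map_add, map_mul, map_one] at hunit
  rw [Sp, hf.fderiv, ← ContinuousLinearMap.star_eq_adjoint, ← map_star, star_eq_conjTranspose,
    Ring.inverse_mul_eq_iff_eq_mul _ _ _ hunit, ← map_sub, ← hS, map_mul, map_add, map_mul, map_one]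

-- `u7 + i v7 = sin (q - i r)` and `a7 + i b7 = cos (q - i r)` for `q = x + z`, `r = y + w`.
def a7 (p : E4) : ℝ := Real.cos (p 0 + p 2) * Real.cosh (p 1 + p 3)

def b7 (p : E4) : ℝ := Real.sin (p 0 + p 2) * Real.sinh (p 1 + p 3)

def jac7 (a b : ℝ) : Matrix (Fin 4) (Fin 4) ℝ :=
  !![a, b, a, b; b, -a, b, -a; -a, -b, -a, -b; -b, a, -b, a]

theorem hasFDerivAt_f7 (p : E4) :
    HasFDerivAt f7 (toEuclideanCLM (𝕜 := ℝ) (jac7 (a7 p) (b7 p))) p := by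
  have hq : HasFDerivAt (fun x : E4 => x 0 + x 2)
      (EuclideanSpace.proj 0 + EuclideanSpace.proj 2 : E4 →L[ℝ] ℝ) p :=
    (PiLp.hasFDerivAt_apply 2 p 0).add (PiLp.hasFDerivAt_apply 2 p 2)
  have hr : HasFDerivAt (fun x : E4 => x 1 + x 3)
      (EuclideanSpace.proj 1 + EuclideanSpace.proj 3 : E4 →L[ℝ] ℝ) p :=
    (PiLp.hasFDerivAt_apply 2 p 1).add (PiLp.hasFDerivAt_apply 2 p 3)
  have hu : HasFDerivAt u7 _ p := hq.sin.mul hr.cosh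
  have hv : HasFDerivAt v7 _ p := (hq.cos.mul hr.sinh).neg
  rw [← hasFDerivWithinAt_univ, hasFDerivWithinAt_piLp]
  intro i
  rw [hasFDerivWithinAt_univ]
  fin_cases i <;>
    [apply hu.congr_fderiv; apply hv.congr_fderiv; apply hu.neg.congr_fderiv;
      apply hv.neg.congr_fderiv] <;>
    ext x <;> simp [jac7, a7, b7, vecHead, vecTail] <;> ring

theorem jac7_mul_self (a b : ℝ) : jac7 a b * jac7 a b = 0 := by
  ext i j
  fin_cases i <;> fin_cases j <;> simp [jac7, mul_apply, Fin.sum_univ_four]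

-- `(1 + 4s) (1 + AᴴA)⁻¹ (Aᴴ - A)` for `A = jac7 a b`, `s = a² + b²`: since `AᴴA = 2s P` with
-- `P = [[I, I], [I, I]]` and `P² = 2P`, the inverse is `1 - 2s/(1 + 4s) P`.
def scaledS7 (a b : ℝ) : Matrix (Fin 4) (Fin 4) ℝ :=
  let s := a ^ 2 + b ^ 2
  !![-(4 * a * s), -(4 * b * s), -(2 * a * (1 + 2 * s)), -(2 * b * (1 + 2 * s));
     -(4 * b * s), 4 * a * s, -(2 * b * (1 + 2 * s)), 2 * a * (1 + 2 * s);
     2 * a * (1 + 2 * s), 2 * b * (1 + 2 * s), 4 * a * s, 4 * b * s;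
     2 * b * (1 + 2 * s), -(2 * a * (1 + 2 * s)), 4 * b * s, -(4 * a * s)]

theorem one_add_conjTranspose_jac7_mul_scaledS7 (a b : ℝ) :
    (1 + (jac7 a b)ᴴ * jac7 a b) * scaledS7 a b
      = (1 + 4 * (a ^ 2 + b ^ 2)) • ((jac7 a b)ᴴ - jac7 a b) := by
  ext i j
  fin_cases i <;> fin_cases j <;>
    simp [jac7, scaledS7, mul_apply, one_apply, Fin.sum_univ_four] <;> ring

theorem scaledS7_mul_self (a b : ℝ) :
    scaledS7 a b * scaledS7 a b = -(4 * (a ^ 2 + b ^ 2) * (1 + 4 * (a ^ 2 + b ^ 2))) • 1 := by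
  ext i j
  fin_cases i <;> fin_cases j <;>
    simp [scaledS7, mul_apply, one_apply, Fin.sum_univ_four] <;> ring

theorem a7_sq_add_b7_sq (p : E4) : a7 p ^ 2 + b7 p ^ 2 = t7 p := by
  simp only [a7, b7, t7, mul_pow, Real.cosh_sq, Real.sin_sq]
  ring

theorem t7_nonneg (p : E4) : 0 ≤ t7 p := by
  unfold t7
  positivity

theorem Sp_f7 (p : E4) :
    Sp f7 p = toEuclideanCLM (𝕜 := ℝ) ((1 + 4 * t7 p)⁻¹ • scaledS7 (a7 p) (b7 p)) := by
  refine Sp_eq_toEuclideanCLM (hasFDerivAt_f7 p) ?_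
  have : 1 + 4 * t7 p ≠ 0 := by linarith [t7_nonneg p]
  rw [mul_smul_comm, one_add_conjTranspose_jac7_mul_scaledS7, a7_sq_add_b7_sq, smul_smul,
    inv_mul_cancel₀ this, one_smul]

theorem Sp_f7_mul_self (p : E4) : Sp f7 p * Sp f7 p = -(cos2 p) • 1 := by
  have : 1 + 4 * t7 p ≠ 0 := by linarith [t7_nonneg p]
  rw [Sp_f7, ← map_mul, smul_mul_smul_comm, scaledS7_mul_self, a7_sq_add_b7_sq, smul_smul,
    map_smul, map_one, cos2]
  congr 1
  field_simp

theorem cos2_lt_one (p : E4) : cos2 p < 1 := by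
  rw [cos2, div_lt_one (by linarith [t7_nonneg p])]
  linarith

theorem fderiv_f7_mul_self (p : E4) : fderiv ℝ f7 p * fderiv ℝ f7 p = 0 := by
  rw [(hasFDerivAt_f7 p).fderiv, ← map_mul, jac7_mul_self, map_zero]

theorem exists_t7_eq {x : ℝ} (hx : 0 ≤ x) : ∃ p : E4, t7 p = x :=
  ⟨mk4 (Real.pi / 2) (Real.arsinh √x) 0 0, by
    simp [t7, mk4, Real.cos_pi_div_two, Real.sinh_arsinh, Real.sq_sqrt hx]⟩

theorem exists_cos2_eq {r : ℝ} (hr₀ : 0 ≤ r) (hr₁ : r < 1) : ∃ p : E4, cos2 p = r := by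
  obtain ⟨p, hp⟩ := exists_t7_eq (x := r / (4 * (1 - r))) (by bound)
  refine ⟨p, ?_⟩
  have : 1 - r ≠ 0 := by linarith
  rw [cos2, hp]
  field_simp
  ring

theorem stmt_7 :
    (∀ p : E4, Sp f7 p * Sp f7 p = -(cos2 p) • 1) ∧
    (∀ p : E4, cos2 p < 1) ∧
    (∀ p : E4, fderiv ℝ f7 p * fderiv ℝ f7 p ≠ -1) ∧
    (∀ r : ℝ, 0 ≤ r → r < 1 → ∃ p : E4, cos2 p = r) := by
  refine ⟨Sp_f7_mul_self, cos2_lt_one, fun p => ?_, fun r => exists_cos2_eq⟩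
  rw [fderiv_f7_mul_self]
  exact (neg_ne_zero.mpr one_ne_zero).symm
end
end
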